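/- arXiv:2111.08586 — 2 statements merged into one kernel-verified Lean document; each statement's English description precedes it below -/
import Mathlib

section
/- Let D be odd, π : V_D → V'_D = V_D/𝔽η_D the quotient map, and 𝒻'(V_D) = 𝒻(V_{D-1}) ∪ {E ∈ 𝒻(V_D) \ 𝒻(V_{D-1}) : dim E < (D−1)/2}. Then E ↦ π(E) is a bijection from 𝒻'(V_D) onto 𝒻(V'_D) := {π(E) : E ∈ 𝒻(V_D)}. -/
open Finset

abbrev Vec := ℕ →₀ ZMod 2

/-- The basis vector `e_i`. -/
noncomputable def e (i : ℕ) : Vec := Finsupp.single i 1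

/-- For an interval `p = (a,b)` (representing `[a,b]`), the vector `e_I = ∑_{i∈[a,b]} e_i`. -/
noncomputable def eI (p : ℕ × ℕ) : Vec := ∑ j ∈ Finset.Icc p.1 p.2, e j

/-- The map `ξ_i` on intervals. -/
def tint (i : ℕ) (p : ℕ × ℕ) : ℕ × ℕ :=
  if i ≤ p.1 then (p.1 + 2, p.2 + 2)
  else if p.2 + 2 ≤ i then p
  else (p.1, p.2 + 2)

/-- The map `t_i` on sets of intervals: `t_i(B') = ξ_i(B') ∪ {[i,i]}`. -/
def tmap (i : ℕ) (B : Finset (ℕ × ℕ)) : Finset (ℕ × ℕ) :=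
  B.image (tint i) ∪ {(i, i)}

/-- The inductively defined family `S_D`. -/
inductive IsS : ℕ → Finset (ℕ × ℕ) → Prop
  | empty (D : ℕ) : IsS D ∅
  | one : IsS 1 {(1, 1)}
  | step (D i : ℕ) (B' : Finset (ℕ × ℕ)) (h1 : 1 ≤ i) (h2 : i ≤ D + 2)
      (h : IsS D B') : IsS (D + 2) (tmap i B')

def primEven (D k : ℕ) : Finset (ℕ × ℕ) := (Finset.Icc 1 k).image fun j => (j, D + 1 - j)
def primOddA (D k : ℕ) : Finset (ℕ × ℕ) := (Finset.Icc 1 k).image fun j => (j, D - j)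
def primOddB (D k : ℕ) : Finset (ℕ × ℕ) := (Finset.Icc 1 k).image fun j => (j + 1, D + 1 - j)

/-- The primitive elements of `𝕊_D`. -/
def IsPrim (D : ℕ) (B : Finset (ℕ × ℕ)) : Prop :=
  B = ∅ ∨
  (Even D ∧ ∃ k, 1 ≤ k ∧ k ≤ D / 2 ∧ B = primEven D k) ∨
  (Odd D ∧ ∃ k, Odd k ∧ 1 ≤ k ∧ k ≤ (D - 1) / 2 ∧ (B = primOddA D k ∨ B = primOddB D k))

/-- The inductively defined family `𝕊_D`. -/
inductive IsSS : ℕ → Finset (ℕ × ℕ) → Prop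
  | prim (D : ℕ) (B : Finset (ℕ × ℕ)) : IsPrim D B → IsSS D B
  | one : IsSS 1 {(1, 1)}
  | step (D i : ℕ) (B' : Finset (ℕ × ℕ)) (h1 : 1 ≤ i) (h2 : i ≤ D + 2)
      (h : IsSS D B') : IsSS (D + 2) (tmap i B')

/-- The subspace `𝔼_B` spanned by the `e_I`, `I ∈ B`. -/
noncomputable def EB (B : Finset (ℕ × ℕ)) : Submodule (ZMod 2) Vec :=
  Submodule.span (ZMod 2) (eI '' (B : Set (ℕ × ℕ)))

/-- Two intervals are non-touching. -/
def Nontouch (p q : ℕ × ℕ) : Prop := p.2 + 2 ≤ q.1 ∨ q.2 + 2 ≤ p.1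

/-- `p ≺ q`: `p = [a,b]` is strictly nested inside `q = [a',b']`, i.e. `a' < a ≤ b < b'`. -/
def Nested (p q : ℕ × ℕ) : Prop := q.1 < p.1 ∧ p.1 ≤ p.2 ∧ p.2 < q.2

/-- `η_D = e_1 + e_3 + ⋯ + e_D` (`D` odd). -/
noncomputable def eta (D : ℕ) : Vec := ∑ j ∈ (Finset.Icc 1 D).filter (fun j => j % 2 = 1), e j

noncomputable def Tfun (i k : ℕ) : Vec :=
  if k + 1 < i then e k
  else if k + 1 = i then e k + e (k + 1) + e (k + 2)
  else e (k + 2)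

/-- The linear map `T_i : V_{D-2} → V_D`. -/
noncomputable def Tlin (i : ℕ) : Vec →ₗ[ZMod 2] Vec :=
  Finsupp.linearCombination (ZMod 2) (Tfun i)

/-- The inductively defined family `𝒻(V_D)` of subspaces. -/
inductive IsF : ℕ → Submodule (ZMod 2) Vec → Prop
  | zero (D : ℕ) : IsF D ⊥
  | one : IsF 1 (Submodule.span (ZMod 2) {e 1})
  | step (D i : ℕ) (E' : Submodule (ZMod 2) Vec) (h1 : 1 ≤ i) (h2 : i ≤ D + 2)
      (h : IsF D E') :
      IsF (D + 2) (Submodule.map (Tlin i) E' ⊔ Submodule.span (ZMod 2) {e i})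

/-- The subspace `V_D = ⟨e_1,…,e_D⟩`. -/
noncomputable def VD (D : ℕ) : Submodule (ZMod 2) Vec :=
  Submodule.span (ZMod 2) (e '' Set.Icc 1 D)

/-- The symplectic form with `(e_i,e_j) = 1` iff `|i-j| = 1`. -/
noncomputable def symp (x y : Vec) : ZMod 2 :=
  x.sum fun i xi => xi * (y (i + 1) + if 1 ≤ i then y (i - 1) else 0)

/-!
Every `E ∈ 𝒻(V_D)` is the span `EB B` of the interval vectors `e_J`, `J ∈ B`, of an interval set
`B` built by the same recursion, because `T_i e_J = e_{ξ_i J}`. Since `η_{D+2} = T_i η_D + e_i`,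
adding `𝔽η` commutes with the recursion step, and `π(E)` only depends on `E + 𝔽η`.

Injectivity: `η` lies in no `E` of dimension `< (D+1)/2`, so `E + 𝔽η` determines `dim E`. On
`𝒻(V_{D-1})` the `D`-th coordinate, which vanishes on `E` but not on `η`, recovers `E`. If
`dim E < (D-1)/2`, an interval vector in `E + 𝔽η` is already one of the `e_J`, `J ∈ B`: pull it
back through `T_i` along the recursion; at the bottom `η_D` (with `D ≥ 3`) is not an interval
vector.

Surjectivity: along the recursion, keep some `E₀ ∈ 𝒻'(V_D)` with `E₀ + 𝔽η = E + 𝔽η`. The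
only step leaving `𝒻'` is `T_{D+2}` applied to an `E₀ ∈ 𝒻(V_{D-1})` of full dimension; then
`E₀ + 𝔽η_D ∈ 𝒻(V_{D+1})` serves instead.
-/

open Module

section Submodules

theorem Submodule.mem_map_sup_span_singleton_iff {R M N : Type*} [Semiring R] [AddCommMonoid M]
    [AddCommMonoid N] [Module R M] [Module R N] {f : M →ₗ[R] N} {W : Submodule R M} {u v : N} :
    v ∈ W.map f ⊔ R ∙ u ↔ ∃ x ∈ W, ∃ c : R, f x + c • u = v := by
  simp only [Submodule.mem_sup, Submodule.mem_map, Submodule.mem_span_singleton]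
  constructor
  · rintro ⟨_, ⟨x, hx, rfl⟩, _, ⟨c, rfl⟩, rfl⟩
    exact ⟨x, hx, c, rfl⟩
  · rintro ⟨x, hx, c, rfl⟩
    exact ⟨_, ⟨x, hx, rfl⟩, _, ⟨c, rfl⟩, rfl⟩

theorem Submodule.sup_span_singleton_add {R M : Type*} [Ring R] [AddCommGroup M] [Module R M]
    {U : Submodule R M} {u : M} (hu : u ∈ U) (v : M) : U ⊔ R ∙ (v + u) = U ⊔ R ∙ v := by
  apply le_antisymm <;> refine sup_le le_sup_left ((Submodule.span_singleton_le_iff_mem _ _).2 ?_)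
  · exact add_mem (Submodule.mem_sup_right (Submodule.mem_span_singleton_self v))
      (Submodule.mem_sup_left hu)
  · simpa using sub_mem (Submodule.mem_sup_right (Submodule.mem_span_singleton_self (v + u)))
      (Submodule.mem_sup_left hu)

theorem Submodule.finrank_sup_span_singleton_of_notMem {K V : Type*} [DivisionRing K]
    [AddCommGroup V] [Module K V] {p : Submodule K V} [FiniteDimensional K p] {v : V}
    (hv : v ∉ p) : finrank K ↥(p ⊔ K ∙ v) = finrank K p + 1 := by
  have hv0 : v ≠ 0 := fun h => hv (h ▸ p.zero_mem)
  have hinf : p ⊓ K ∙ v = ⊥ := (Submodule.disjoint_span_singleton_of_notMem hv).eq_bot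
  have := Submodule.finrank_sup_add_finrank_inf_eq p (K ∙ v)
  rwa [hinf, finrank_bot, add_zero, finrank_span_singleton hv0] at this

theorem Submodule.map_mkQ_eq_map_mkQ_iff {R M : Type*} [Ring R] [AddCommGroup M] [Module R M]
    {K E₁ E₂ : Submodule R M} : E₁.map K.mkQ = E₂.map K.mkQ ↔ E₁ ⊔ K = E₂ ⊔ K := by
  rw [← (Submodule.comap_injective_of_surjective K.mkQ_surjective).eq_iff,
    Submodule.comap_map_mkQ, Submodule.comap_map_mkQ, sup_comm, sup_comm K]

theorem Submodule.eq_of_sup_span_singleton_eq_of_le_ker {K V : Type*} [DivisionRing K]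
    [AddCommGroup V] [Module K V] {E₁ E₂ : Submodule K V} {v : V} (f : V →ₗ[K] K) (hv : f v ≠ 0)
    (h₁ : E₁ ≤ LinearMap.ker f) (h₂ : E₂ ≤ LinearMap.ker f) (h : E₁ ⊔ K ∙ v = E₂ ⊔ K ∙ v) :
    E₁ = E₂ := by
  have hdisj : K ∙ v ⊓ LinearMap.ker f = ⊥ :=
    (Submodule.disjoint_span_singleton_of_notMem (s := LinearMap.ker f) hv).symm.eq_bot
  have key : ∀ E ≤ LinearMap.ker f, (E ⊔ K ∙ v) ⊓ LinearMap.ker f = E := fun E hE => by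
    rw [sup_inf_assoc_of_le _ hE, hdisj, sup_bot_eq]
  rw [← key E₁ h₁, h, key E₂ h₂]

end Submodules

section Coordinates

variable {i D : ℕ}

theorem e_apply (k j : ℕ) : e k j = if k = j then 1 else 0 := Finsupp.single_apply

theorem eI_apply (a b j : ℕ) : eI (a, b) j = if a ≤ j ∧ j ≤ b then 1 else 0 := by
  simp only [eI, Finsupp.finsetSum_apply, e_apply, Finset.sum_ite_eq', Finset.mem_Icc]

theorem eta_apply (D j : ℕ) : eta D j = if 1 ≤ j ∧ j ≤ D ∧ j % 2 = 1 then 1 else 0 := by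
  simp only [eta, Finsupp.finsetSum_apply, e_apply, Finset.sum_ite_eq', Finset.mem_filter,
    Finset.mem_Icc, and_assoc]

theorem eI_self (i : ℕ) : eI (i, i) = e i := by
  simp [eI]

theorem e_ne_zero (i : ℕ) : e i ≠ 0 := Finsupp.single_ne_zero.2 one_ne_zero

theorem eta_one : eta 1 = e 1 := by
  ext j
  rw [eta_apply, e_apply]
  split_ifs <;> first | rfl | omega

theorem eta_apply_self (hD : Odd D) : eta D D = 1 := by
  rw [eta_apply, if_pos ⟨hD.pos, le_rfl, Nat.odd_iff.mp hD⟩]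

theorem eta_ne_zero (hD : Odd D) : eta D ≠ 0 := fun h => by
  simpa [h] using eta_apply_self hD

/-- `T_i` spreads position `i - 1` over `i - 1, i, i + 1` and shifts the later positions by two,
so `Tlin i x` reads its `j`-th coordinate off `x (tlinSrc i j)`. -/
def tlinSrc (i j : ℕ) : ℕ := if j + 1 < i then j else if j ≤ i + 1 then i - 1 else j - 2

def tlinSec (i k : ℕ) : ℕ := if k + 1 < i then k else if k + 1 = i then k else k + 2

theorem tlinSrc_tlinSec (hi : 1 ≤ i) (k : ℕ) : tlinSrc i (tlinSec i k) = k := by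
  unfold tlinSrc tlinSec
  split_ifs <;> omega

theorem tlinSec_ne (i k : ℕ) : tlinSec i k ≠ i := by
  unfold tlinSec
  split_ifs <;> omega

theorem Tfun_apply (hi : 1 ≤ i) (k j : ℕ) : Tfun i k j = if k = tlinSrc i j then 1 else 0 := by
  unfold Tfun tlinSrc
  split_ifs <;> simp only [Finsupp.add_apply, e_apply] <;> split_ifs <;> first | rfl | omega

theorem Tlin_apply (hi : 1 ≤ i) (x : Vec) (j : ℕ) : Tlin i x j = x (tlinSrc i j) := by
  rw [Tlin, Finsupp.linearCombination_apply, Finsupp.sum_apply]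
  simp only [Finsupp.smul_apply, Tfun_apply hi, smul_eq_mul, mul_ite, mul_one, mul_zero]
  rw [Finsupp.sum_ite_eq']
  split_ifs with h
  · rfl
  · exact (Finsupp.notMem_support_iff.mp h).symm

theorem Tlin_add_smul_e_apply_tlinSec (hi : 1 ≤ i) (x : Vec) (c : ZMod 2) (k : ℕ) :
    (Tlin i x + c • e i) (tlinSec i k) = x k := by
  rw [Finsupp.add_apply, Finsupp.smul_apply, Tlin_apply hi, tlinSrc_tlinSec hi, e_apply,
    if_neg (tlinSec_ne i k).symm, smul_zero, add_zero]

theorem Tlin_add_smul_e_inj (hi : 1 ≤ i) {x y : Vec} {c d : ZMod 2}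
    (h : Tlin i x + c • e i = Tlin i y + d • e i) : x = y ∧ c = d := by
  have hxy : x = y := by
    ext k
    rw [← Tlin_add_smul_e_apply_tlinSec hi x c k, h, Tlin_add_smul_e_apply_tlinSec hi]
  subst hxy
  exact ⟨rfl, by simpa [e_apply] using congrArg (· i) h⟩

theorem Tlin_injective (hi : 1 ≤ i) : Function.Injective (Tlin i) := fun x y h =>
  (Tlin_add_smul_e_inj hi (c := 0) (d := 0) (by rw [h])).1

theorem Tlin_ne_e (hi : 1 ≤ i) (x : Vec) : Tlin i x ≠ e i := fun h =>
  zero_ne_one (Tlin_add_smul_e_inj hi (x := x) (y := 0) (c := 0) (d := 1) (by simp [h])).2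

theorem Tlin_eI (hi : 1 ≤ i) {p : ℕ × ℕ} (hp : p.1 ≤ p.2) : Tlin i (eI p) = eI (tint i p) := by
  obtain ⟨a, b⟩ := p
  ext j
  simp only [Tlin_apply hi, tint, tlinSrc]
  split_ifs <;> simp only [eI_apply] <;> split_ifs <;> first | rfl | omega

theorem eta_add_two (hD : Odd D) (hi1 : 1 ≤ i) (hi2 : i ≤ D + 2) :
    eta (D + 2) = Tlin i (eta D) + e i := by
  obtain ⟨m, rfl⟩ := hD
  ext j
  simp only [Finsupp.add_apply, Tlin_apply hi1, eta_apply, e_apply, tlinSrc]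
  split_ifs <;> first | rfl | omega

end Coordinates

section Family

variable {i D : ℕ} {B : Finset (ℕ × ℕ)} {E : Submodule (ZMod 2) Vec}

theorem mem_VD_iff {x : Vec} : x ∈ VD D ↔ ∀ j, ¬(1 ≤ j ∧ j ≤ D) → x j = 0 := by
  have : VD D = Finsupp.supported (ZMod 2) (ZMod 2) (Set.Icc 1 D) :=
    (Finsupp.supported_eq_span_single _ _).symm
  rw [this, Finsupp.mem_supported']
  simp only [Set.mem_Icc]

theorem e_mem_VD (h1 : 1 ≤ i) (h2 : i ≤ D) : e i ∈ VD D :=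
  Submodule.subset_span ⟨i, ⟨h1, h2⟩, rfl⟩

theorem eta_mem_VD (D : ℕ) : eta D ∈ VD D :=
  mem_VD_iff.2 fun j hj => by rw [eta_apply, if_neg (by omega)]

theorem Tlin_mem_VD (hi : 1 ≤ i) {x : Vec} (hx : x ∈ VD D) : Tlin i x ∈ VD (D + 2) :=
  mem_VD_iff.2 fun j hj => by
    rw [Tlin_apply hi]
    exact mem_VD_iff.1 hx _ (by unfold tlinSrc; split_ifs <;> omega)

theorem Tlin_of_mem_VD {x : Vec} (hx : x ∈ VD D) : Tlin (D + 2) x = x := by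
  ext j
  rw [Tlin_apply (by omega)]
  unfold tlinSrc
  split_ifs
  · rfl
  all_goals rw [mem_VD_iff.1 hx _ (by omega), mem_VD_iff.1 hx _ (by omega)]

theorem map_Tlin_of_le_VD {W : Submodule (ZMod 2) Vec} (hW : W ≤ VD D) :
    W.map (Tlin (D + 2)) = W := by
  ext x
  refine ⟨?_, fun hx => ⟨x, hx, Tlin_of_mem_VD (hW hx)⟩⟩
  rintro ⟨y, hy, rfl⟩
  rwa [Tlin_of_mem_VD (hW hy)]

theorem map_Tlin_sup_eta (hD : Odd D) (hi1 : 1 ≤ i) (hi2 : i ≤ D + 2)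
    (W : Submodule (ZMod 2) Vec) :
    W.map (Tlin i) ⊔ ZMod 2 ∙ e i ⊔ ZMod 2 ∙ eta (D + 2)
      = (W ⊔ ZMod 2 ∙ eta D).map (Tlin i) ⊔ ZMod 2 ∙ e i := by
  rw [eta_add_two hD hi1 hi2, Submodule.sup_span_singleton_add
      (Submodule.mem_sup_right (Submodule.mem_span_singleton_self _)),
    Submodule.map_sup, Submodule.map_span, Set.image_singleton, sup_right_comm]

theorem IsS.fst_le_snd (h : IsS D B) : ∀ p ∈ B, p.1 ≤ p.2 := by
  induction h with
  | empty => simp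
  | one => simp
  | step D i B' _ _ _ ih =>
    simp only [tmap, Finset.mem_union, Finset.mem_image, Finset.mem_singleton]
    rintro _ (⟨⟨a, b⟩, hp, rfl⟩ | rfl)
    · have := ih _ hp
      unfold tint
      split_ifs <;> dsimp only at * <;> omega
    · exact le_rfl

theorem EB_tmap (hi : 1 ≤ i) (hB : ∀ p ∈ B, p.1 ≤ p.2) :
    EB (tmap i B) = (EB B).map (Tlin i) ⊔ ZMod 2 ∙ e i := by
  rw [tmap, EB, Finset.coe_union, Finset.coe_image, Finset.coe_singleton, Set.image_union,
    Submodule.span_union, EB, Submodule.map_span, ← Set.image_comp, ← Set.image_comp,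
    Set.image_singleton, eI_self]
  congr 2
  exact Set.image_congr fun p hp => (Tlin_eI hi (hB p hp)).symm

instance (B : Finset (ℕ × ℕ)) : FiniteDimensional (ZMod 2) (EB B) :=
  FiniteDimensional.span_of_finite _ (B.finite_toSet.image eI)

theorem IsF.exists_isS (h : IsF D E) : ∃ B, IsS D B ∧ EB B = E := by
  induction h with
  | zero D => exact ⟨∅, .empty D, by simp [EB]⟩
  | one => exact ⟨{(1, 1)}, .one, by simp [EB, eI_self]⟩
  | step D i E' h1 h2 _ ih =>
    obtain ⟨B', hB', rfl⟩ := ih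
    exact ⟨tmap i B', .step D i B' h1 h2 hB', EB_tmap h1 hB'.fst_le_snd⟩

theorem IsF.finiteDimensional (h : IsF D E) : FiniteDimensional (ZMod 2) E := by
  obtain ⟨B, -, rfl⟩ := h.exists_isS
  infer_instance

theorem finrank_map_Tlin_sup (hi : 1 ≤ i) (W : Submodule (ZMod 2) Vec)
    [FiniteDimensional (ZMod 2) W] :
    finrank (ZMod 2) ↥(W.map (Tlin i) ⊔ ZMod 2 ∙ e i) = finrank (ZMod 2) W + 1 := by
  have he : e i ∉ W.map (Tlin i) := fun ⟨x, _, hx⟩ => Tlin_ne_e hi x hx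
  rw [Submodule.finrank_sup_span_singleton_of_notMem he,
    (Submodule.equivMapOfInjective _ (Tlin_injective hi) W).finrank_eq]

theorem IsF.finrank_step (h : IsF D E) (hi : 1 ≤ i) :
    finrank (ZMod 2) ↥(E.map (Tlin i) ⊔ ZMod 2 ∙ e i) = finrank (ZMod 2) E + 1 :=
  have := h.finiteDimensional
  finrank_map_Tlin_sup hi E

end Family

section Subspaces

variable {i D : ℕ} {E : Submodule (ZMod 2) Vec}

theorem isF_two_span_e_one : IsF 2 (ZMod 2 ∙ e 1) := by
  simpa using IsF.step 0 1 ⊥ le_rfl (by omega) (.zero 0)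

theorem IsF.succ (h : IsF D E) : IsF (D + 1) E := by
  induction h with
  | zero D => exact .zero _
  | one => exact isF_two_span_e_one
  | step D i E' h1 h2 _ ih => exact .step (D + 1) i E' h1 (by omega) ih

theorem IsF.of_sub_one (hD : 1 ≤ D) (h : IsF (D - 1) E) :
    IsF D E := by
  simpa [Nat.sub_add_cancel hD] using h.succ

theorem IsF.le_VD (h : IsF D E) : E ≤ VD D := by
  induction h with
  | zero D => exact bot_le
  | one => exact (Submodule.span_singleton_le_iff_mem _ _).2 (e_mem_VD le_rfl le_rfl)
  | step D i E' h1 h2 _ ih =>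
    refine sup_le ?_ ((Submodule.span_singleton_le_iff_mem _ _).2 (e_mem_VD h1 h2))
    exact Submodule.map_le_iff_le_comap.2 fun x hx => Tlin_mem_VD h1 (ih hx)

theorem IsF.apply_eq_zero (h : IsF D E) {x : Vec} (hx : x ∈ E) {m : ℕ} (hm : D < m) :
    x m = 0 :=
  mem_VD_iff.1 (h.le_VD hx) m (by omega)

theorem IsF.finrank_le (h : IsF D E) : finrank (ZMod 2) E ≤ (D + 1) / 2 := by
  induction h with
  | zero => simp
  | one => simp [finrank_span_singleton (e_ne_zero 1)]
  | step D i E' h1 _ hE' ih => rw [hE'.finrank_step h1]; omega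

theorem IsF.eta_notMem (h : IsF D E) (hD : Odd D) (hr : finrank (ZMod 2) E < (D + 1) / 2) :
    eta D ∉ E := by
  induction h with
  | zero D => simpa using eta_ne_zero hD
  | one => simp [finrank_span_singleton (e_ne_zero 1)] at hr
  | step D i E' h1 h2 hE' ih =>
    have hD' : Odd D := by simpa [Nat.odd_add] using hD
    rw [hE'.finrank_step h1] at hr
    intro hmem
    obtain ⟨x, hx, c, hxc⟩ := Submodule.mem_map_sup_span_singleton_iff.1 hmem
    rw [eta_add_two hD' h1 h2] at hxc
    have hx' := (Tlin_add_smul_e_inj h1 (c := c) (d := 1) (by rw [hxc, one_smul])).1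
    exact ih hD' (by omega) (hx' ▸ hx)

end Subspaces

section Surjectivity

variable {i D : ℕ} {E : Submodule (ZMod 2) Vec}

theorem IsF.sup_eta (h : IsF D E) (hD : Even D) (hr : finrank (ZMod 2) E = D / 2) :
    IsF (D + 2) (E ⊔ ZMod 2 ∙ eta (D + 1)) := by
  induction h with
  | zero D =>
    obtain rfl : D = 0 := by obtain ⟨m, rfl⟩ := hD; simp at hr; omega
    simpa [eta_one] using isF_two_span_e_one
  | one => exact absurd hD (by decide)
  | step D i E' h1 h2 hE' ih =>
    have hD' : Even D := by simpa [Nat.even_add] using hD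
    rw [hE'.finrank_step h1] at hr
    have := IsF.step (D + 2) i _ h1 (by omega) (ih hD' (by omega))
    rwa [← map_Tlin_sup_eta hD'.add_one h1 (by omega)] at this

theorem map_Tlin_add_two_sup_eta (hD : Odd D) {W : Submodule (ZMod 2) Vec} (hW : W ≤ VD D) :
    (W ⊔ ZMod 2 ∙ eta D).map (Tlin (D + 2)) ⊔ ZMod 2 ∙ e (D + 2)
      = W ⊔ ZMod 2 ∙ eta D ⊔ ZMod 2 ∙ eta (D + 2) := by
  rw [Submodule.map_sup, map_Tlin_of_le_VD hW, Submodule.map_span, Set.image_singleton,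
    Tlin_of_mem_VD (eta_mem_VD D), eta_add_two hD (by omega) le_rfl,
    Tlin_of_mem_VD (eta_mem_VD D), add_comm (eta D), Submodule.sup_span_singleton_add
      (Submodule.mem_sup_right (Submodule.mem_span_singleton_self _))]

theorem IsF.exists_sup_eta_eq (h : IsF D E) (hD : Odd D) :
    ∃ E₀, (IsF (D - 1) E₀ ∨
        (IsF D E₀ ∧ finrank (ZMod 2) E₀ < (D - 1) / 2 ∧ ∃ x ∈ E₀, x D ≠ 0)) ∧
      E₀ ⊔ ZMod 2 ∙ eta D = E ⊔ ZMod 2 ∙ eta D := by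
  induction h with
  | zero D => exact ⟨⊥, Or.inl (.zero _), rfl⟩
  | one => exact ⟨⊥, Or.inl (.zero _), by rw [eta_one, bot_sup_eq, sup_idem]⟩
  | step D i E' h1 h2 hE' ih =>
    have hD' : Odd D := by simpa [Nat.odd_add] using hD
    obtain ⟨E₀, hE₀, heq⟩ := ih hD'
    have hstep : E₀.map (Tlin i) ⊔ ZMod 2 ∙ e i ⊔ ZMod 2 ∙ eta (D + 2)
        = E'.map (Tlin i) ⊔ ZMod 2 ∙ e i ⊔ ZMod 2 ∙ eta (D + 2) := by
      rw [map_Tlin_sup_eta hD' h1 h2, map_Tlin_sup_eta hD' h1 h2, heq]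
    have he : e (D + 2) ∈ E₀.map (Tlin (D + 2)) ⊔ ZMod 2 ∙ e (D + 2) ∧ e (D + 2) (D + 2) ≠ 0 :=
      ⟨Submodule.mem_sup_right (Submodule.mem_span_singleton_self _), by simp [e]⟩
    obtain ⟨n, rfl⟩ := hD'
    rcases hE₀ with hE₀ | ⟨hE₀, hr, x, hx, hxD⟩
    · have hE₀' : IsF (2 * n + 1) E₀ := by simpa using hE₀.succ
      obtain hi | rfl : i ≤ 2 * n + 2 ∨ i = 2 * n + 1 + 2 := by omega
      · refine ⟨_, Or.inl ?_, hstep⟩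
        simpa using IsF.step (2 * n) i E₀ h1 (by omega) (by simpa using hE₀)
      by_cases hr : finrank (ZMod 2) E₀ < n
      · refine ⟨_, Or.inr ⟨.step _ _ E₀ h1 le_rfl hE₀', ?_, _, he⟩, hstep⟩
        rw [hE₀.finrank_step h1]
        omega
      · -- `E₀` has full dimension, so `η_D` can be absorbed into it
        refine ⟨E₀ ⊔ ZMod 2 ∙ eta (2 * n + 1), Or.inl ?_, ?_⟩
        · simpa using (by simpa using hE₀ : IsF (2 * n) E₀).sup_eta (by simp)
            (by have := hE₀.finrank_le; simp at hr ⊢; omega)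
        · rw [← map_Tlin_add_two_sup_eta ⟨n, rfl⟩ hE₀'.le_VD, heq,
            ← map_Tlin_sup_eta ⟨n, rfl⟩ h1 h2]
    · refine ⟨_, Or.inr ⟨.step _ i E₀ h1 h2 hE₀, ?_, ?_⟩, hstep⟩
      · rw [hE₀.finrank_step h1]
        omega
      obtain hi | rfl : i ≤ 2 * n + 2 ∨ i = 2 * n + 1 + 2 := by omega
      · refine ⟨Tlin i x, Submodule.mem_sup_left (Submodule.mem_map_of_mem hx), ?_⟩
        rwa [Tlin_apply h1, show tlinSrc i (2 * n + 1 + 2) = 2 * n + 1 by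
          unfold tlinSrc; split_ifs <;> omega]
      · exact ⟨_, he⟩

end Surjectivity

section Recovery

variable {D : ℕ} {B : Finset (ℕ × ℕ)} {E₁ E₂ : Submodule (ZMod 2) Vec}

theorem eI_notMem_span_eta {a b : ℕ} (hab : a ≤ b) (hD : 3 ≤ D) : eI (a, b) ∉ ZMod 2 ∙ eta D := by
  rw [Submodule.mem_span_singleton]
  rintro ⟨c, hc⟩
  obtain rfl | rfl := (by decide : ∀ d : ZMod 2, d = 0 ∨ d = 1) c
  · have ha := DFunLike.congr_fun hc a
    simp [eI_apply, hab] at ha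
  · rw [one_smul] at hc
    have h1 := DFunLike.congr_fun hc 1
    have h2 := DFunLike.congr_fun hc 2
    have h3 := DFunLike.congr_fun hc 3
    rw [eta_apply, eI_apply] at h1 h2 h3
    split_ifs at h1 h2 h3 <;>
      first
        | omega
        | exact absurd h1 (by decide)
        | exact absurd h2 (by decide)
        | exact absurd h3 (by decide)
        | tauto

def untint (i : ℕ) (p : ℕ × ℕ) : ℕ × ℕ :=
  if p.2 + 2 ≤ i then p else if i + 2 ≤ p.1 then (p.1 - 2, p.2 - 2) else (p.1, p.2 - 2)

theorem eI_eq_Tlin_add_smul_e {i : ℕ} (hi : 1 ≤ i) {x : Vec} {c : ZMod 2} {a b : ℕ} (hab : a ≤ b)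
    (hne : (a, b) ≠ (i, i)) (h : eI (a, b) = Tlin i x + c • e i) :
    (untint i (a, b)).1 ≤ (untint i (a, b)).2 ∧ x = eI (untint i (a, b)) ∧
      tint i (untint i (a, b)) = (a, b) := by
  have hx : ∀ k, x k = eI (a, b) (tlinSec i k) := fun k => by
    rw [h, Tlin_add_smul_e_apply_tlinSec hi]
  have hsym : eI (a, b) (i - 1) = eI (a, b) (i + 1) := by
    simp only [h, Finsupp.add_apply, Finsupp.smul_apply, Tlin_apply hi, e_apply, tlinSrc]
    split_ifs <;> first | rfl | omega
  simp only [eI_apply] at hsym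
  simp only [ne_eq, Prod.mk.injEq] at hne
  refine ⟨?_, ?_, ?_⟩
  · unfold untint
    split_ifs at hsym ⊢ <;> first | omega | exact absurd hsym (by decide)
  · ext k
    rw [hx, eI_apply, eI_apply]
    unfold untint tlinSec
    split_ifs at hsym ⊢ <;> first | rfl | omega | exact absurd hsym (by decide)
  · unfold untint tint
    split_ifs at hsym ⊢ <;> simp only [Prod.mk.injEq, true_and] <;>
      first | omega | exact absurd hsym (by decide)

theorem IsS.mem_of_eI_mem_sup_eta (h : IsS D B) (hD : Odd D)
    (hr : finrank (ZMod 2) (EB B) < (D - 1) / 2) {a b : ℕ} (hab : a ≤ b)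
    (hmem : eI (a, b) ∈ EB B ⊔ ZMod 2 ∙ eta D) : (a, b) ∈ B := by
  induction h generalizing a b with
  | empty D =>
    have h3 : 3 ≤ D := by obtain ⟨m, rfl⟩ := hD; simp at hr; omega
    simp only [EB, Finset.coe_empty, Set.image_empty, Submodule.span_empty, bot_sup_eq] at hmem
    exact absurd hmem (eI_notMem_span_eta hab h3)
  | one => exact absurd hr (Nat.not_lt_zero _)
  | step D i B' h1 h2 hB' ih =>
    have hD' : Odd D := by simpa [Nat.odd_add] using hD
    have := hD'.pos
    rw [EB_tmap h1 hB'.fst_le_snd] at hr hmem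
    rw [map_Tlin_sup_eta hD' h1 h2] at hmem
    rw [finrank_map_Tlin_sup h1] at hr
    obtain ⟨x, hx, c, hxc⟩ := Submodule.mem_map_sup_span_singleton_iff.1 hmem
    simp only [tmap, Finset.mem_union, Finset.mem_image, Finset.mem_singleton]
    by_cases hne : (a, b) = (i, i)
    · exact Or.inr hne
    obtain ⟨hab', rfl, ht⟩ := eI_eq_Tlin_add_smul_e h1 hab hne hxc.symm
    exact Or.inl ⟨_, ih hD' (by omega) hab' hx, ht⟩

theorem IsF.le_of_le_sup_eta (hD : Odd D)
    (h₁ : IsF D E₁) (h₂ : IsF D E₂) (hr : finrank (ZMod 2) E₂ < (D - 1) / 2)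
    (hle : E₁ ≤ E₂ ⊔ ZMod 2 ∙ eta D) : E₁ ≤ E₂ := by
  obtain ⟨B₁, hB₁, rfl⟩ := h₁.exists_isS
  obtain ⟨B₂, hB₂, rfl⟩ := h₂.exists_isS
  refine Submodule.span_mono (Set.image_mono fun p hp => ?_)
  exact hB₂.mem_of_eI_mem_sup_eta hD hr (hB₁.fst_le_snd p hp)
    (hle (Submodule.subset_span ⟨p, hp, rfl⟩))

end Recovery

theorem injOn_sup_eta {D : ℕ} (hD : Odd D) :
    Set.InjOn (· ⊔ ZMod 2 ∙ eta D)
      {E | IsF (D - 1) E ∨ (IsF D E ∧ finrank (ZMod 2) E < (D - 1) / 2)} := by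
  have key : ∀ {E}, IsF (D - 1) E ∨ (IsF D E ∧ finrank (ZMod 2) E < (D - 1) / 2) →
      IsF D E ∧ eta D ∉ E := by
    obtain ⟨n, rfl⟩ := hD
    rintro E (h | ⟨h, hr⟩)
    · have := h.finrank_le
      exact ⟨h.of_sub_one (by omega), h.of_sub_one (by omega) |>.eta_notMem ⟨n, rfl⟩ (by omega)⟩
    · exact ⟨h, h.eta_notMem ⟨n, rfl⟩ (by omega)⟩
  intro E₁ h₁ E₂ h₂ heq
  obtain ⟨hF₁, hη₁⟩ := key h₁
  obtain ⟨hF₂, hη₂⟩ := key h₂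
  have hrank : finrank (ZMod 2) E₁ = finrank (ZMod 2) E₂ := by
    have := hF₁.finiteDimensional
    have := hF₂.finiteDimensional
    have := congrArg (fun E : Submodule (ZMod 2) Vec => finrank (ZMod 2) E) heq
    simpa [Submodule.finrank_sup_span_singleton_of_notMem, hη₁, hη₂] using this
  by_cases hsmall : finrank (ZMod 2) E₁ < (D - 1) / 2
  · exact le_antisymm (hF₁.le_of_le_sup_eta hD hF₂ (hrank ▸ hsmall) (le_sup_left.trans heq.le))
      (hF₂.le_of_le_sup_eta hD hF₁ hsmall (le_sup_left.trans heq.ge))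
  · have hF₁' : IsF (D - 1) E₁ := h₁.resolve_right fun h => hsmall h.2
    have hF₂' : IsF (D - 1) E₂ := h₂.resolve_right fun h => hsmall (hrank ▸ h.2)
    have := hD.pos
    refine Submodule.eq_of_sup_span_singleton_eq_of_le_ker (Finsupp.lapply D) ?_
      (fun x hx => hF₁'.apply_eq_zero hx (by omega))
      (fun x hx => hF₂'.apply_eq_zero hx (by omega)) heq
    simp [eta_apply_self hD]

/-- for odd `D`, `E ↦ π(E)` is a bijection from
`𝒻'(V_D) = 𝒻(V_{D-1}) ∪ {E ∈ 𝒻(V_D) \ 𝒻(V_{D-1}) : dim E < (D−1)/2}` onto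
`𝒻(V'_D) = {π(E) : E ∈ 𝒻(V_D)}`, where `π : V_D → V_D/𝔽η_D`. -/
theorem stmt17 (D : ℕ) (hD : Odd D) :
    Set.BijOn
      (fun E : Submodule (ZMod 2) Vec =>
        Submodule.map (Submodule.span (ZMod 2) {eta D}).mkQ E)
      {E | IsF (D - 1) E ∨
        (IsF D E ∧ ¬ IsF (D - 1) E ∧ Module.finrank (ZMod 2) E < (D - 1) / 2)}
      {F | ∃ E : Submodule (ZMod 2) Vec, IsF D E ∧
        F = Submodule.map (Submodule.span (ZMod 2) {eta D}).mkQ E} := by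
  refine ⟨?_, ?_, ?_⟩
  · rintro E (hE | ⟨hE, -⟩)
    exacts [⟨E, hE.of_sub_one hD.pos, rfl⟩, ⟨E, hE, rfl⟩]
  · intro E₁ h₁ E₂ h₂ h
    exact injOn_sup_eta hD (h₁.imp_right fun h => ⟨h.1, h.2.2⟩)
      (h₂.imp_right fun h => ⟨h.1, h.2.2⟩) (Submodule.map_mkQ_eq_map_mkQ_iff.1 h)
  · rintro _ ⟨E, hE, rfl⟩
    obtain ⟨E₀, hE₀, heq⟩ := hE.exists_sup_eta_eq hD
    refine ⟨E₀, ?_, Submodule.map_mkQ_eq_map_mkQ_iff.2 heq⟩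
    rcases hE₀ with hE₀ | ⟨hE₀, hr, x, hx, hxD⟩
    · exact Or.inl hE₀
    · have := hD.pos
      exact Or.inr ⟨hE₀, fun h => hxD (h.apply_eq_zero hx (by omega)), hr⟩
end

section
/- Let D be even, and for x ∈ V_D written uniquely as x = e_{[a_1,b_1]} + ... + e_{[a_r,b_r]} with 1 ≤ a_1 ≤ b_1, b_s + 2 ≤ a_{s+1}, b_r ≤ D, define u(x) = Σ_{s : a_s ≢ b_s (mod 2)} (−1)^{a_s}. Then for D ≥ 2 and any i ∈ [1,D], c ∈ 𝔽_2, and v' ∈ V_{D-2}, one has u(T_i(v') + c·e_i) = u(v') — i.e., u is invariant under the maps v' ↦ T_i(v') + c e_i. -/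
open Finset

/-- The left endpoints of the maximal runs of a finite set of positive integers. -/
def leftEnds (s : Finset ℕ) : Finset ℕ := s.filter fun i => i - 1 ∉ s

/-- The right endpoints of the maximal runs. -/
def rightEnds (s : Finset ℕ) : Finset ℕ := s.filter fun i => i + 1 ∉ s

/-- The right endpoint of the run of `s` starting at `a`. -/
def blockEnd (s : Finset ℕ) (a : ℕ) : ℕ :=
  WithTop.untopD 0 (((rightEnds s).filter fun j => a ≤ j).min)

/-- The invariant `u(x) = Σ_{s : a_s ≢ b_s mod 2} (−1)^{a_s}` over the maximal blocks
`[a_s,b_s]` of the support of `x`. -/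
noncomputable def uInv (x : Vec) : ℤ :=
  ∑ a ∈ leftEnds x.support,
    if (a + blockEnd x.support a) % 2 = 1 then (-1 : ℤ) ^ a else 0

/-! The invariant is a signed count of adjacent pairs of the support: a run `[a,b]` contributes
`∑_{a ≤ j < b} (-1)^j`, which is `(-1)^a` if `b - a` is odd and `0` otherwise. Both sums equal
half of `∑ (-1)^a - ∑ (-1)^b` over all left ends `a` and right ends `b` of runs.
Coordinatewise, `x = T_i v' + c e_i` is `v'` with the coordinate `v'_{i-1}` repeated at `i - 1`
and `i + 1` and an arbitrary value inserted at `i` between them. The two pairs through position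
`i` carry opposite signs and are present or absent together, and the pairs to the right of `i`
are shifted by the even amount `2`, so the signed count does not change. -/

section Runs

variable {s : Finset ℕ} {a b : ℕ}

lemma mem_leftEnds : a ∈ leftEnds s ↔ a ∈ s ∧ a - 1 ∉ s := mem_filter

lemma mem_rightEnds : a ∈ rightEnds s ↔ a ∈ s ∧ a + 1 ∉ s := mem_filter

lemma exists_mem_rightEnds_of_lt (ha : a ∈ s) (hab : a < b) (hb : b ∉ s) :
    ∃ r ∈ rightEnds s, a ≤ r ∧ r < b := by
  induction b, hab using Nat.le_induction with
  | base => exact ⟨a, mem_rightEnds.2 ⟨ha, hb⟩, le_rfl, lt_add_one a⟩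
  | succ n _ ih =>
    by_cases hn : n ∈ s
    · exact ⟨n, mem_rightEnds.2 ⟨hn, hb⟩, by omega, lt_add_one n⟩
    · obtain ⟨r, hr, har, hrn⟩ := ih hn
      exact ⟨r, hr, har, by omega⟩

lemma exists_mem_leftEnds_of_lt (ha : a ∉ s) (hab : a < b) (hb : b ∈ s) :
    ∃ l ∈ leftEnds s, a < l ∧ l ≤ b := by
  induction b, hab using Nat.le_induction with
  | base => exact ⟨a + 1, mem_leftEnds.2 ⟨hb, ha⟩, lt_add_one a, le_rfl⟩
  | succ n _ ih =>
    by_cases hn : n ∈ s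
    · obtain ⟨l, hl, hal, hln⟩ := ih hn
      exact ⟨l, hl, hal, by omega⟩
    · exact ⟨n + 1, mem_leftEnds.2 ⟨hb, hn⟩, by omega, le_rfl⟩

lemma isLeast_blockEnd (ha : a ∈ s) :
    IsLeast {r | r ∈ rightEnds s ∧ a ≤ r} (blockEnd s a) := by
  have hmax : s.max' ⟨a, ha⟩ ∈ (rightEnds s).filter (a ≤ ·) :=
    mem_filter.2 ⟨mem_rightEnds.2 ⟨max'_mem _ _, fun h => by have := le_max' s _ h; omega⟩,
      le_max' s a ha⟩
  rw [blockEnd, ← coe_min' ⟨_, hmax⟩, WithTop.untopD_coe, ← coe_filter]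
  exact isLeast_min' _ _

lemma blockEnd_lt_of_lt {a' : ℕ} (ha : a ∈ leftEnds s) (ha' : a' ∈ leftEnds s) (h : a < a') :
    blockEnd s a < a' := by
  obtain ⟨has, -⟩ := mem_leftEnds.1 ha
  obtain ⟨ha's, ha'1⟩ := mem_leftEnds.1 ha'
  have hlt : a < a' - 1 := by
    rcases Nat.lt_or_ge a (a' - 1) with h' | h'
    · exact h'
    · exact absurd (show a' - 1 = a by omega ▸ has) ha'1
  obtain ⟨r, hr, har, hra⟩ := exists_mem_rightEnds_of_lt has hlt ha'1
  have := (isLeast_blockEnd has).2 ⟨hr, har⟩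
  omega

lemma blockEnd_bijOn (h0 : 0 ∉ s) : Set.BijOn (blockEnd s) (leftEnds s) (rightEnds s) := by
  refine ⟨fun a ha => (isLeast_blockEnd (mem_leftEnds.1 ha).1).1.1, ?_, ?_⟩
  · intro a ha a' ha' heq
    have hle := (isLeast_blockEnd (mem_leftEnds.1 ha).1).1.2
    have hle' := (isLeast_blockEnd (mem_leftEnds.1 ha').1).1.2
    rcases lt_trichotomy a a' with h | h | h
    · have := blockEnd_lt_of_lt ha ha' h
      omega
    · exact h
    · have := blockEnd_lt_of_lt ha' ha h
      omega
  · intro r hr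
    obtain ⟨hrs, hr1⟩ := mem_rightEnds.1 hr
    have hr0 : 0 < r := Nat.pos_of_ne_zero fun h => h0 (h ▸ hrs)
    obtain ⟨l₀, hl₀, -, hl₀r⟩ := exists_mem_leftEnds_of_lt h0 hr0 hrs
    -- the run containing `r` starts at the last left end before `r`
    obtain ⟨l, hl, hlmax⟩ := exists_max_image ((leftEnds s).filter (· ≤ r)) id
      ⟨l₀, mem_filter.2 ⟨hl₀, hl₀r⟩⟩
    obtain ⟨hlL, hlr⟩ := mem_filter.1 hl
    refine ⟨l, hlL, (isLeast_blockEnd (mem_leftEnds.1 hlL).1).unique ⟨⟨hr, hlr⟩, ?_⟩⟩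
    rintro r' ⟨hr', hlr'⟩
    by_contra! hr'r
    obtain ⟨hr's, hr'1⟩ := mem_rightEnds.1 hr'
    have : r' + 1 ≠ r := fun h => hr'1 (h ▸ hrs)
    obtain ⟨l', hl', hrl', hl'r⟩ := exists_mem_leftEnds_of_lt hr'1 (by omega) hrs
    have := hlmax l' (mem_filter.2 ⟨hl', hl'r⟩)
    simp only [id] at this
    omega

lemma two_mul_sum_adjacent (h0 : 0 ∉ s) :
    2 * ∑ j ∈ s.filter (· + 1 ∈ s), (-1 : ℤ) ^ j
      = ∑ j ∈ leftEnds s, (-1 : ℤ) ^ j - ∑ j ∈ rightEnds s, (-1 : ℤ) ^ j := by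
  have hR := sum_filter_add_sum_filter_not s (· + 1 ∈ s) fun j => (-1 : ℤ) ^ j
  have hL := sum_filter_add_sum_filter_not s (· - 1 ∈ s) fun j => (-1 : ℤ) ^ j
  have hpos : ∀ j ∈ s, 1 ≤ j := fun j hj => Nat.one_le_iff_ne_zero.2 fun h => h0 (h ▸ hj)
  have hshift : ∑ j ∈ s.filter (· - 1 ∈ s), (-1 : ℤ) ^ j
      = -∑ j ∈ s.filter (· + 1 ∈ s), (-1 : ℤ) ^ j := by
    rw [← sum_neg_distrib]
    refine sum_nbij' (· - 1) (· + 1) ?_ ?_ ?_ ?_ ?_ <;> intro j hj <;>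
      simp only [mem_filter] at hj ⊢
    · obtain ⟨k, rfl⟩ := Nat.exists_eq_add_of_le' (hpos j hj.1)
      simpa using hj.symm
    · simpa using hj.symm
    · exact Nat.sub_add_cancel (hpos j hj.1)
    · exact Nat.add_sub_cancel j 1
    · obtain ⟨k, rfl⟩ := Nat.exists_eq_add_of_le' (hpos j hj.1)
      simp [pow_succ]
  rw [leftEnds, rightEnds]
  linarith

lemma two_mul_ite_neg_one_pow (a b : ℕ) :
    2 * (if (a + b) % 2 = 1 then (-1 : ℤ) ^ a else 0) = (-1) ^ a - (-1) ^ b := by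
  have hb : (-1 : ℤ) ^ b = (-1) ^ a * (-1) ^ (a + b) := by
    rw [← pow_add, ← add_assoc, ← two_mul, pow_add, pow_mul]
    norm_num
  split_ifs with h
  · rw [hb, Odd.neg_one_pow (Nat.odd_iff.2 h)]
    ring
  · rw [hb, Even.neg_one_pow (Nat.even_iff.2 (by omega : (a + b) % 2 = 0))]
    ring

lemma sum_leftEnds_eq_sum_adjacent (h0 : 0 ∉ s) :
    ∑ a ∈ leftEnds s, (if (a + blockEnd s a) % 2 = 1 then (-1 : ℤ) ^ a else 0)
      = ∑ j ∈ s.filter (· + 1 ∈ s), (-1 : ℤ) ^ j := by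
  refine mul_left_cancel₀ (two_ne_zero (α := ℤ)) ?_
  have hbij := blockEnd_bijOn h0
  rw [mul_sum, two_mul_sum_adjacent h0, ← sum_nbij (blockEnd s) hbij.mapsTo hbij.injOn hbij.surjOn
    (fun _ _ => rfl), ← sum_sub_distrib]
  exact sum_congr rfl fun a _ => two_mul_ite_neg_one_pow a _

end Runs

def adjSign (x : Vec) (j : ℕ) : ℤ := if x j ≠ 0 ∧ x (j + 1) ≠ 0 then (-1) ^ j else 0

lemma uInv_eq_sum_range_adjSign {x : Vec} {N : ℕ} (h0 : x 0 = 0)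
    (hN : ∀ j, N ≤ j → x j = 0) :
    uInv x = ∑ j ∈ range N, adjSign x j := by
  have hpairs : x.support.filter (· + 1 ∈ x.support)
      = (range N).filter fun j => x j ≠ 0 ∧ x (j + 1) ≠ 0 := by
    ext j
    simp only [mem_filter, Finsupp.mem_support_iff, mem_range]
    exact ⟨fun h => ⟨by_contra fun hj => h.1 (hN j (not_lt.1 hj)), h⟩, And.right⟩
  rw [uInv, sum_leftEnds_eq_sum_adjacent (by simpa using h0), hpairs, sum_filter]
  rfl

lemma adjSign_add_adjSign_succ {x : Vec} {j : ℕ} (h : x (j + 2) = x j) :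
    adjSign x j + adjSign x (j + 1) = 0 := by
  unfold adjSign
  rw [h]
  by_cases hj : x j ≠ 0 ∧ x (j + 1) ≠ 0
  · rw [if_pos hj, if_pos hj.symm, pow_succ]
    ring
  · rw [if_neg hj, if_neg fun h => hj h.symm, add_zero]

lemma sum_range_adjSign_eq {x v : Vec} {i N : ℕ} (hlow : ∀ j ≤ i, x j = v j)
    (hhigh : ∀ j, x (i + 2 + j) = v (i + j)) :
    ∑ j ∈ range (i + 2 + N), adjSign x j = ∑ j ∈ range (i + N), adjSign v j := by
  have hcancel : adjSign x i + adjSign x (i + 1) = 0 :=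
    adjSign_add_adjSign_succ ((hhigh 0).trans (hlow i le_rfl).symm)
  rw [sum_range_add, sum_range_add, sum_range_add _ i N, sum_range_succ, sum_range_one, add_zero,
    hcancel, add_zero]
  congr 1
  · refine sum_congr rfl fun j hj => ?_
    have hj := mem_range.1 hj
    simp only [adjSign, hlow j hj.le, hlow (j + 1) hj]
  · refine sum_congr rfl fun j _ => ?_
    have hsign : (-1 : ℤ) ^ (i + 2 + j) = (-1) ^ (i + j) := by
      rw [add_right_comm, pow_add _ (i + j), neg_one_sq, mul_one]
    simp only [adjSign, hhigh, add_assoc (i + 2) j 1, add_assoc i j 1, hsign]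

lemma Tlin_apply_of_Tfun_apply {i j k : ℕ} (h : ∀ m, Tfun i m j = e m k) (v : Vec) :
    Tlin i v j = v k := by
  have hcomp : (Finsupp.lapply j).comp (Tlin i) = Finsupp.lapply k := by
    ext m
    simp [Tlin, h, e]
  exact LinearMap.congr_fun hcomp v

lemma Tlin_apply_of_lt {i j : ℕ} (hj : j < i) (v : Vec) : Tlin i v j = v j :=
  Tlin_apply_of_Tfun_apply (fun m => by
    unfold Tfun
    split_ifs <;> simp only [e, Finsupp.add_apply, Finsupp.single_apply] <;> split_ifs <;>
      first | omega | decide) v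

lemma Tlin_succ_apply_add_two (i j : ℕ) (v : Vec) : Tlin (i + 1) v (i + 2 + j) = v (i + j) :=
  Tlin_apply_of_Tfun_apply (fun m => by
    unfold Tfun
    split_ifs <;> simp only [e, Finsupp.add_apply, Finsupp.single_apply] <;> split_ifs <;>
      first | omega | decide) v

lemma VD_eq_supported (n : ℕ) : VD n = Finsupp.supported (ZMod 2) (ZMod 2) (Set.Icc 1 n) :=
  (Finsupp.supported_eq_span_single _ _).symm

theorem stmt19_general (D i : ℕ) (h1 : 1 ≤ i)
    (c : ZMod 2) (v' : Vec) (hv : v' ∈ VD (D - 2)) :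
    uInv (Tlin i v' + c • e i) = uInv v' := by
  obtain ⟨i, rfl⟩ : ∃ i₀, i = i₀ + 1 := ⟨i - 1, by omega⟩
  rw [VD_eq_supported, Finsupp.mem_supported'] at hv
  have hv0 : ∀ j, (j = 0 ∨ D ≤ j) → v' j = 0 := fun j hj =>
    hv j (by simp only [Set.mem_Icc]; omega)
  set x := Tlin (i + 1) v' + c • e (i + 1)
  have hlow : ∀ j ≤ i, x j = v' j := fun j hj => by
    simp [x, Tlin_apply_of_lt (Nat.lt_succ_of_le hj), e, show i + 1 ≠ j by omega]
  have hhigh : ∀ j, x (i + 2 + j) = v' (i + j) := fun j => by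
    simp [x, Tlin_succ_apply_add_two, e, show i + 1 ≠ i + 2 + j by omega]
  rw [uInv_eq_sum_range_adjSign (N := i + 2 + D) (by rw [hlow 0 i.zero_le, hv0 0 (by omega)]),
    uInv_eq_sum_range_adjSign (N := i + D) (hv0 0 (by omega)) fun j hj => hv0 j (by omega)]
  · exact sum_range_adjSign_eq hlow hhigh
  · intro j hj
    obtain ⟨k, rfl⟩ := Nat.exists_eq_add_of_le hj
    rw [add_assoc, hhigh, ← add_assoc, hv0 _ (by omega)]

/-- for even `D ≥ 2`, `i ∈ [1,D]`, `c ∈ 𝔽_2` and `v' ∈ V_{D-2}`,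
`u(T_i(v') + c e_i) = u(v')`. -/
theorem stmt19 (D i : ℕ) (hD : Even D) (h2 : 2 ≤ D) (h1 : 1 ≤ i) (hi : i ≤ D)
    (c : ZMod 2) (v' : Vec) (hv : v' ∈ VD (D - 2)) :
    uInv (Tlin i v' + c • e i) = uInv v' :=
  stmt19_general D i h1 c v' hv
end
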